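/- Let X be a commutative S-group scheme that is separated and unramified over S, and let P be a commutative S-group scheme which is locally of finite presentation over S and has connected fibres. Then the group of S-homomorphisms Hom(P, X) is zero. -/

import Mathlib

/-!
Shared prelude: fppf and étale topologies on the category of `S`-schemes, commutative
group schemes as representable abelian presheaves, (commutative) extensions of abelian
fppf sheaves, biextensions, algebraic spaces, and related notions, following
C. Bertolin, "Extensions and biextensions of locally constant group schemes, tori and
abelian schemes".
-/

open CategoryTheory AlgebraicGeometry Opposite Limits

universe u

namespace FormalPaper


/-- A morphism of schemes is flat if all its stalk maps are flat ring homomorphisms. -/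
def FlatHom {X Y : Scheme.{u}} (f : X ⟶ Y) : Prop := ∀ x : X, RingHom.Flat (f.stalkMap x).hom

/-- A morphism of schemes is unramified if it is locally of finite presentation and its
diagonal is an open immersion. -/
def UnramifiedHom {X Y : Scheme.{u}} (f : X ⟶ Y) : Prop :=
  LocallyOfFinitePresentation f ∧ IsOpenImmersion (pullback.diagonal f)

/-- A family of maps is an fppf cover if each member is flat and locally of finite
presentation and the family is jointly surjective. -/
def IsFppfCover {S : Scheme.{u}} {X : Over S} (R : Presieve X) : Prop :=
  (∀ ⦃Y : Over S⦄ (f : Y ⟶ X), R f → FlatHom f.left ∧ LocallyOfFinitePresentation f.left) ∧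
  (∀ x : X.left, ∃ (Y : Over S) (f : Y ⟶ X) (_ : R f) (y : Y.left), f.left.base y = x)

/-- An étale cover: each member étale, jointly surjective. -/
def IsEtaleCover {S : Scheme.{u}} {X : Over S} (R : Presieve X) : Prop :=
  (∀ ⦃Y : Over S⦄ (f : Y ⟶ X), R f → IsEtale f.left) ∧
  (∀ x : X.left, ∃ (Y : Over S) (f : Y ⟶ X) (_ : R f) (y : Y.left), f.left.base y = x)

/-- The fppf topology on the category of `S`-schemes: the coarsest Grothendieck topology
for which every fppf covering family generates a covering sieve. -/
def fppfTopology (S : Scheme.{u}) : GrothendieckTopology (Over S) :=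
  sInf { J | ∀ (X : Over S) (R : Presieve X), IsFppfCover R → Sieve.generate R ∈ J X }

/-- The (big) étale topology on the category of `S`-schemes. -/
def etaleTopology (S : Scheme.{u}) : GrothendieckTopology (Over S) :=
  sInf { J | ∀ (X : Over S) (R : Presieve X), IsEtaleCover R → Sieve.generate R ∈ J X }

/-- A commutative `S`-group scheme, seen as a representable abelian presheaf on the
category of `S`-schemes (its functor of points, together with a representing object). -/
structure CommGroupScheme (S : Scheme.{u}) where
  /-- The functor of points, valued in abelian groups. -/
  P : (Over S)ᵒᵖ ⥤ AddCommGrpCat.{u}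
  /-- The representing `S`-scheme. -/
  X : Over S
  /-- Representability of the underlying presheaf of sets. -/
  repr : P ⋙ forget AddCommGrpCat ≅ yoneda.obj X

/-- The fibre of `f` over a point `s` of the base. -/
noncomputable def fiberOver {X S : Scheme.{u}} (f : X ⟶ S) (s : S) : Scheme.{u} :=
  pullback f (S.fromSpecResidueField s)

/-- A morphism of schemes has connected fibres. -/
def HasConnectedFibres {X S : Scheme.{u}} (f : X ⟶ S) : Prop :=
  ∀ s : S, ConnectedSpace (fiberOver f s)

/-- An abelian `S`-scheme: a commutative group scheme which is smooth and proper over `S`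
with connected fibres. -/
def IsAbelianScheme {S : Scheme.{u}} (A : CommGroupScheme S) : Prop :=
  IsSmooth A.X.hom ∧ IsProper A.X.hom ∧ HasConnectedFibres A.X.hom

/-- Restriction ("base change") of a presheaf on `S`-schemes to a presheaf on `B`-schemes
along `g : B ⟶ S`. -/
abbrev resP {S : Scheme.{u}} (P : (Over S)ᵒᵖ ⥤ AddCommGrpCat.{u}) {B : Scheme.{u}} (g : B ⟶ S) :
    (Over B)ᵒᵖ ⥤ AddCommGrpCat.{u} :=
  (Over.map g).op ⋙ P

/-- The presheaf of locally constant `M`-valued functions, i.e. the functor of points of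
the constant `B`-group scheme defined by the abelian group `M`. -/
def LCPresheaf (B : Scheme.{u}) (M : Type u) [AddCommGroup M] : (Over B)ᵒᵖ ⥤ AddCommGrpCat.{u} where
  obj T := AddCommGrpCat.of (LocallyConstant T.unop.left M)
  map {T T'} f := AddCommGrpCat.ofHom
    { toFun := LocallyConstant.comap (f.unop.left.base.hom)
      map_zero' := by ext; simp [LocallyConstant.coe_comap]
      map_add' := by intros; ext; simp [LocallyConstant.coe_comap] }
  map_id T := by
    ext x a; first | rfl | (simp [LocallyConstant.coe_comap]; done) | (simp [LocallyConstant.coe_comap]; rfl)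
  map_comp f g := by
    ext x a; first | rfl | (simp [LocallyConstant.coe_comap]; done) | (simp [LocallyConstant.coe_comap]; rfl)

/-- `X` is, locally for the étale topology on `S`, the constant group scheme defined by a
finitely generated free `ℤ`-module. -/
def IsLatticeGroupScheme {S : Scheme.{u}} (X : CommGroupScheme S) : Prop :=
  ∃ (ι : Type u) (Si : ι → Scheme.{u}) (f : ∀ i, Si i ⟶ S),
    (∀ i, IsEtale (f i)) ∧
    (∀ s : S, ∃ (i : ι) (y : Si i), (f i).base y = s) ∧
    (∀ i, ∃ r : ℕ, Nonempty (resP X.P (f i) ≅ LCPresheaf (Si i) (Fin r → ULift.{u} ℤ)))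

/-- `X` has constant geometric fibres defined by finitely generated free `ℤ`-modules. -/
def HasLatticeGeometricFibres {S : Scheme.{u}} (X : CommGroupScheme S) : Prop :=
  ∀ (K : Type u) [Field K] [IsAlgClosed K] (g : Spec (.of K) ⟶ S),
    ∃ r : ℕ, Nonempty (resP X.P g ≅ LCPresheaf (Spec (.of K)) (Fin r → ULift.{u} ℤ))

/-- The functor sending a commutative ring `R` to `(Rˣ)^r`, written additively. -/
def unitsAdd (r : ℕ) : CommRingCat.{u} ⥤ AddCommGrpCat.{u} where
  obj R := AddCommGrpCat.of (Fin r → Additive Rˣ)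
  map {R R'} f := AddCommGrpCat.ofHom (AddMonoidHom.compLeft (AddMonoidHom.mk'
      (fun x => Additive.ofMul (Units.map (f.hom : R →* R') x.toMul))
      (by intro a b; simp)) (Fin r))
  map_id R := by ext; first | rfl | simp
  map_comp f g := by ext; first | rfl | simp

/-- The functor of points of the split torus `𝔾ₘ^r` over `B`. -/
def GmPow (B : Scheme.{u}) (r : ℕ) : (Over B)ᵒᵖ ⥤ AddCommGrpCat.{u} :=
  (Over.forget B).op ⋙ Scheme.Γ ⋙ unitsAdd r

/-- An `S`-torus: a commutative `S`-group scheme which is, locally for the étale topology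
on `S`, isomorphic to a split torus `𝔾ₘ^r`. -/
def IsTorus {S : Scheme.{u}} (T : CommGroupScheme S) : Prop :=
  ∃ (ι : Type u) (Si : ι → Scheme.{u}) (f : ∀ i, Si i ⟶ S),
    (∀ i, IsEtale (f i)) ∧
    (∀ s : S, ∃ (i : ι) (y : Si i), (f i).base y = s) ∧
    (∀ i, ∃ r : ℕ, Nonempty (resP T.P (f i) ≅ GmPow (Si i) r))

/-- A (commutative) extension `0 → G → E → Q → 0` of abelian presheaves for the fppf
topology over `B`: `i` is injective with image the kernel of `p`, and `p` is locally
surjective for the fppf topology (expressed via explicit fppf covering families). -/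
structure Extension (B : Scheme.{u}) (Q G : (Over B)ᵒᵖ ⥤ AddCommGrpCat.{u}) where
  /-- The middle term. -/
  E : (Over B)ᵒᵖ ⥤ AddCommGrpCat.{u}
  /-- The inclusion of the kernel. -/
  i : G ⟶ E
  /-- The projection onto the quotient. -/
  p : E ⟶ Q
  comp_eq_zero : i ≫ p = 0
  inj : ∀ T, Function.Injective (i.app T)
  ker_sub : ∀ (T : (Over B)ᵒᵖ) (x : E.obj T), p.app T x = 0 → ∃ g, i.app T g = x
  locSurj : ∀ (U : Over B) (q : Q.obj (op U)), ∃ R : Presieve U, IsFppfCover R ∧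
    ∀ ⦃Z : Over B⦄ (f : Z ⟶ U), R f → ∃ x : E.obj (op Z), p.app (op Z) x = Q.map f.op q

namespace Extension

variable {B : Scheme.{u}} {Q G : (Over B)ᵒᵖ ⥤ AddCommGrpCat.{u}}

/-- An extension is trivial (split) if the projection admits a group-theoretic section. -/
def Splits (e : Extension B Q G) : Prop :=
  ∃ s : Q ⟶ e.E, s ≫ e.p = 𝟙 Q

/-- The restriction of the extension `e` to the base-changed situation over `g : Z ⟶ B`
splits. -/
def SplitsOver (e : Extension B Q G) {Z : Scheme.{u}} (g : Z ⟶ B) : Prop :=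
  ∃ s : resP Q g ⟶ resP e.E g, s ≫ CategoryTheory.Functor.whiskerLeft (Over.map g).op e.p = 𝟙 (resP Q g)

/-- The push-out `n_* e` of the extension `e` along multiplication by `n` on `G`,
restricted over `g : Z ⟶ B`, is trivial; equivalently, multiplication by `n` on `G`
extends to a homomorphism `E → G` over `Z`. -/
def MultSplitsOver (e : Extension B Q G) {Z : Scheme.{u}} (g : Z ⟶ B) (n : ℕ) : Prop :=
  ∃ f : resP e.E g ⟶ resP G g,
    CategoryTheory.Functor.whiskerLeft (Over.map g).op e.i ≫ f = n • 𝟙 (resP G g)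

/-- The extension `e` is (globally) of order `n`: the push-out `n_* e` of `e` along
multiplication by `n` on `G` is a trivial extension; equivalently, multiplication by `n`
on `G` extends to a homomorphism `E → G`. -/
def IsOfOrder (e : Extension B Q G) (n : ℕ) : Prop :=
  ∃ f : e.E ⟶ G, e.i ≫ f = n • 𝟙 G

/-- The extension `e` is of finite order locally over `B` for the Zariski topology. -/
def ZariskiLocallyOfFiniteOrder (e : Extension B Q G) : Prop :=
  ∀ s : B, ∃ U : B.Opens, s ∈ U ∧ ∃ n : ℕ, 0 < n ∧ e.MultSplitsOver U.ι n

/-- The extension `e` splits locally for the fppf topology on `B`. -/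
def LocallySplit (e : Extension B Q G) : Prop :=
  ∃ R : Presieve (Over.mk (𝟙 B)), IsFppfCover R ∧
    ∀ ⦃Z : Over B⦄ (f : Z ⟶ Over.mk (𝟙 B)), R f → e.SplitsOver Z.hom

/-- The middle term of the extension is representable by a scheme. -/
def RepresentableByScheme (e : Extension B Q G) : Prop :=
  ∃ W : Over B, Nonempty (e.E ⋙ forget AddCommGrpCat ≅ yoneda.obj W)

/-- There is a homomorphism of extensions `e ⟶ e'` (over the identity of `Q` and `G`)
after restriction along `g : Z ⟶ B`. -/
def HomOver (e e' : Extension B Q G) {Z : Scheme.{u}} (g : Z ⟶ B) : Prop :=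
  ∃ φ : resP e.E g ⟶ resP e'.E g,
    CategoryTheory.Functor.whiskerLeft (Over.map g).op e.i ≫ φ =
      CategoryTheory.Functor.whiskerLeft (Over.map g).op e'.i ∧
    φ ≫ CategoryTheory.Functor.whiskerLeft (Over.map g).op e'.p =
      CategoryTheory.Functor.whiskerLeft (Over.map g).op e.p

/-- Two extensions become isomorphic locally for the fppf topology on `B`. -/
def LocallyIsomorphic (e e' : Extension B Q G) : Prop :=
  ∃ R : Presieve (Over.mk (𝟙 B)), IsFppfCover R ∧
    ∀ ⦃Z : Over B⦄ (f : Z ⟶ Over.mk (𝟙 B)), R f → e.HomOver e' Z.hom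

end Extension

/-- A presheaf of abelian groups on `S`-schemes is divisible if multiplication by every
nonzero integer is an epimorphism of fppf sheaves, i.e. is locally surjective for the
fppf topology. -/
def IsDivisible {B : Scheme.{u}} (P : (Over B)ᵒᵖ ⥤ AddCommGrpCat.{u}) : Prop :=
  ∀ (n : ℤ), n ≠ 0 → ∀ (U : Over B) (x : P.obj (op U)), ∃ R : Presieve U, IsFppfCover R ∧
    ∀ ⦃Z : Over B⦄ (f : Z ⟶ U), R f → ∃ y : P.obj (op Z), n • y = P.map f.op x

/-- A functor on `S`-schemes is an algebraic space over `S`: it is a sheaf for the étale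
topology, it admits a representable étale surjective cover by a scheme, and it is
quasi-separated over `S` (the diagonal is representable by quasi-compact morphisms). -/
structure IsAlgebraicSpace (S : Scheme.{u}) (F : (Over S)ᵒᵖ ⥤ Type u) : Prop where
  isSheaf : Presheaf.IsSheaf (etaleTopology S) F
  exists_cover : ∃ (U : Over S) (π : yoneda.obj U ⟶ F),
    ∀ (T : Over S) (x : yoneda.obj T ⟶ F), ∃ (W : Over S) (a : W ⟶ U) (b : W ⟶ T),
      IsEtale b.left ∧ Surjective b.left ∧
      IsPullback (yoneda.map a) (yoneda.map b) π x
  quasiSeparated : ∀ (T : Over S) (x y : yoneda.obj T ⟶ F),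
    ∃ (W : Over S) (b : W ⟶ T) (h : yoneda.map b ≫ x = yoneda.map b ≫ y),
      QuasiCompact b.left ∧ Nonempty (IsLimit (Fork.ofι (yoneda.map b) h))

/-- Comparison isomorphism between the two ways of viewing a `T'`-scheme as an `S`-scheme. -/
def cmpIso {S : Scheme.{u}} {T T' : Over S} (f : T' ⟶ T) (U : Over T'.left) :
    (Over.map T'.hom).obj U ≅ (Over.map T.hom).obj ((Over.map f.left).obj U) :=
  Over.isoMk (Iso.refl _) (by simp)

/-- `e'` is the restriction (base change) of the extension `e` along `f : T' ⟶ T`. -/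
def ExtRestriction {S : Scheme.{u}} {Q G : (Over S)ᵒᵖ ⥤ AddCommGrpCat.{u}} {T T' : Over S}
    (f : T' ⟶ T)
    (e : Extension T.left (resP Q T.hom) (resP G T.hom))
    (e' : Extension T'.left (resP Q T'.hom) (resP G T'.hom)) : Prop :=
  ∃ θ : ∀ U : (Over T'.left)ᵒᵖ, e'.E.obj U → e.E.obj ((Over.map f.left).op.obj U),
    (∀ U, Function.Bijective (θ U)) ∧
    (∀ (U : (Over T'.left)ᵒᵖ) (x y : e'.E.obj U), θ U (x + y) = θ U x + θ U y) ∧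
    (∀ {U V : (Over T'.left)ᵒᵖ} (g : U ⟶ V) (x : e'.E.obj U),
      θ V (e'.E.map g x) = e.E.map ((Over.map f.left).op.map g) (θ U x)) ∧
    (∀ (U : (Over T'.left)ᵒᵖ) (gg : (resP G T'.hom).obj U),
      θ U (e'.i.app U gg) = e.i.app _ (G.map ((cmpIso f U.unop).inv.op) gg)) ∧
    (∀ (U : (Over T'.left)ᵒᵖ) (x : e'.E.obj U),
      e.p.app _ (θ U x) = Q.map ((cmpIso f U.unop).inv.op) (e'.p.app U x))

/-- `F` is the fppf sheaf `uExt¹(Q, G)` associated to the presheaf of isomorphism classes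
of extensions of `Q` by `G`: there is a classifying map `cl`, compatible with restriction,
which is locally injective and locally surjective, and `F` is a sheaf. -/
structure IsExtensionSheafification (S : Scheme.{u}) (Q G : (Over S)ᵒᵖ ⥤ AddCommGrpCat.{u})
    (F : (Over S)ᵒᵖ ⥤ AddCommGrpCat.{u}) where
  isSheaf : Presheaf.IsSheaf (fppfTopology S) F
  cl : ∀ T : Over S, Extension T.left (resP Q T.hom) (resP G T.hom) → F.obj (op T)
  cl_zero_of_splits : ∀ T e, Extension.Splits e → cl T e = 0
  locallySplit_of_cl_zero : ∀ T e, cl T e = 0 → Extension.LocallySplit e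
  compat : ∀ (T T' : Over S) (f : T' ⟶ T) e e', ExtRestriction f e e' →
    cl T' e' = F.map f.op (cl T e)
  locInj : ∀ (T : Over S) e e', cl T e = cl T e' → Extension.LocallyIsomorphic e e'
  locSurj : ∀ (T : Over S) (x : F.obj (op T)), ∃ R : Presieve T, IsFppfCover R ∧
    ∀ ⦃Z : Over S⦄ (f : Z ⟶ T), R f →
      ∃ e : Extension Z.left (resP Q Z.hom) (resP G Z.hom), cl Z e = F.map f.op x

/-- Comparison isomorphism used to restrict homomorphisms of restricted presheaves. -/
def cmpIso' {S B' B'' : Scheme.{u}} (h : B'' ⟶ B') (g : B' ⟶ S) (U : Over B'') :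
    (Over.map (h ≫ g)).obj U ≅ (Over.map g).obj ((Over.map h).obj U) :=
  Over.isoMk (Iso.refl _) (by simp)

/-- `f'` is the restriction of the homomorphism `f` along `h : B'' ⟶ B'`. -/
def HomRestriction {S : Scheme.{u}} {A Bp : (Over S)ᵒᵖ ⥤ AddCommGrpCat.{u}}
    {B' B'' : Scheme.{u}} (h : B'' ⟶ B') (g : B' ⟶ S)
    (f : resP A g ⟶ resP Bp g) (f' : resP A (h ≫ g) ⟶ resP Bp (h ≫ g)) : Prop :=
  ∀ (U : (Over B'')ᵒᵖ) (a : A.obj ((Over.map (h ≫ g)).op.obj U)),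
    Bp.map ((cmpIso' h g U.unop).inv.op) (f'.app U a) =
      f.app ((Over.map h).op.obj U) (A.map ((cmpIso' h g U.unop).inv.op) a)
/-- A biextension of `(P, Q)` by `G` in the topos of fppf sheaves over `S` (SGA7 VII 2.1):
a `G`-torsor `B` over `P × Q` together with two compatible partial composition laws making
it an extension of `Q_P` by `G_P` and of `P_Q` by `G_Q`. -/
structure Biextension (S : Scheme.{u}) (P Q G : (Over S)ᵒᵖ ⥤ AddCommGrpCat.{u}) where
  B : (Over S)ᵒᵖ ⥤ Type u
  isSheaf : Presheaf.IsSheaf (fppfTopology S) B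
  p : ∀ T : (Over S)ᵒᵖ, B.obj T → P.obj T
  p_natural : ∀ {T T'} (f : T ⟶ T') (b : B.obj T), p T' (B.map f b) = P.map f (p T b)
  q : ∀ T : (Over S)ᵒᵖ, B.obj T → Q.obj T
  q_natural : ∀ {T T'} (f : T ⟶ T') (b : B.obj T), q T' (B.map f b) = Q.map f (q T b)
  act : ∀ T : (Over S)ᵒᵖ, G.obj T → B.obj T → B.obj T
  act_p : ∀ T g b, p T (act T g b) = p T b
  act_q : ∀ T g b, q T (act T g b) = q T b
  act_zero : ∀ T b, act T 0 b = b
  act_add : ∀ T g g' b, act T (g + g') b = act T g (act T g' b)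
  act_natural : ∀ {T T'} (f : T ⟶ T') (g : G.obj T) (b : B.obj T),
    B.map f (act T g b) = act T' (G.map f g) (B.map f b)
  act_free : ∀ T (g : G.obj T) b, act T g b = b → g = 0
  act_trans : ∀ T (b b' : B.obj T), p T b = p T b' → q T b = q T b' → ∃ g, act T g b = b'
  loc_nonempty : ∀ (T : Over S) (x : P.obj (op T)) (y : Q.obj (op T)),
    ∃ R : Presieve T, IsFppfCover R ∧ ∀ ⦃Z : Over S⦄ (f : Z ⟶ T), R f →
      ∃ b : B.obj (op Z), p (op Z) b = P.map f.op x ∧ q (op Z) b = Q.map f.op y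
  /-- first partial composition law: addition of points lying over the same point of `Q` -/
  add₁ : ∀ (T : (Over S)ᵒᵖ) (b b' : B.obj T), q T b = q T b' → B.obj T
  add₁_p : ∀ T b b' h, p T (add₁ T b b' h) = p T b + p T b'
  add₁_q : ∀ T b b' h, q T (add₁ T b b' h) = q T b
  add₁_natural : ∀ {T T'} (f : T ⟶ T') b b' h h',
    B.map f (add₁ T b b' h) = add₁ T' (B.map f b) (B.map f b') h'
  add₁_comm : ∀ T b b' h h', add₁ T b b' h = add₁ T b' b h'
  add₁_assoc : ∀ T b b' b'' h₁ h₂ h₃ h₄,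
    add₁ T (add₁ T b b' h₁) b'' h₂ = add₁ T b (add₁ T b' b'' h₃) h₄
  add₁_act : ∀ T g b b' h h', add₁ T (act T g b) b' h' = act T g (add₁ T b b' h)
  /-- second partial composition law: addition of points lying over the same point of `P` -/
  add₂ : ∀ (T : (Over S)ᵒᵖ) (b b' : B.obj T), p T b = p T b' → B.obj T
  add₂_p : ∀ T b b' h, p T (add₂ T b b' h) = p T b
  add₂_q : ∀ T b b' h, q T (add₂ T b b' h) = q T b + q T b'
  add₂_natural : ∀ {T T'} (f : T ⟶ T') b b' h h',
    B.map f (add₂ T b b' h) = add₂ T' (B.map f b) (B.map f b') h'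
  add₂_comm : ∀ T b b' h h', add₂ T b b' h = add₂ T b' b h'
  add₂_assoc : ∀ T b b' b'' h₁ h₂ h₃ h₄,
    add₂ T (add₂ T b b' h₁) b'' h₂ = add₂ T b (add₂ T b' b'' h₃) h₄
  add₂_act : ∀ T g b b' h h', add₂ T (act T g b) b' h' = act T g (add₂ T b b' h)
  /-- compatibility between the two partial composition laws -/
  interchange : ∀ (T : (Over S)ᵒᵖ) (b₁ b₂ b₃ b₄ : B.obj T)
    (h₁₂ : q T b₁ = q T b₂) (h₃₄ : q T b₃ = q T b₄)
    (h₁₃ : p T b₁ = p T b₃) (h₂₄ : p T b₂ = p T b₄) (k₁ k₂),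
    add₂ T (add₁ T b₁ b₂ h₁₂) (add₁ T b₃ b₄ h₃₄) k₁ =
      add₁ T (add₂ T b₁ b₃ h₁₃) (add₂ T b₂ b₄ h₂₄) k₂

namespace Biextension

variable {S : Scheme.{u}} {P Q G : (Over S)ᵒᵖ ⥤ AddCommGrpCat.{u}}

/-- A trivialization of a biextension: a global bi-additive section. -/
structure Trivialization (b : Biextension S P Q G) where
  s : ∀ T : (Over S)ᵒᵖ, P.obj T → Q.obj T → b.B.obj T
  natural : ∀ {T T'} (f : T ⟶ T') x y, b.B.map f (s T x y) = s T' (P.map f x) (Q.map f y)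
  p_s : ∀ T x y, b.p T (s T x y) = x
  q_s : ∀ T x y, b.q T (s T x y) = y
  add_left : ∀ T x x' y h, s T (x + x') y = b.add₁ T (s T x y) (s T x' y) h
  add_right : ∀ T x y y' h, s T x (y + y') = b.add₂ T (s T x y) (s T x y') h

/-- A biextension is trivial if it admits a bi-additive section. -/
def IsTrivial (b : Biextension S P Q G) : Prop := Nonempty b.Trivialization

/-- A trivialization of the pull-back `(n × m)^* b` of `b` along multiplication by `n` on
`P` and by `m` on `Q`: a bi-additive natural family of points of `b` lying over
`(n • x, m • y)`. -/
structure MulTrivialization (n m : ℤ) (b : Biextension S P Q G) where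
  s : ∀ T : (Over S)ᵒᵖ, P.obj T → Q.obj T → b.B.obj T
  natural : ∀ {T T'} (f : T ⟶ T') x y, b.B.map f (s T x y) = s T' (P.map f x) (Q.map f y)
  p_s : ∀ T x y, b.p T (s T x y) = n • x
  q_s : ∀ T x y, b.q T (s T x y) = m • y
  add_left : ∀ T x x' y h, s T (x + x') y = b.add₁ T (s T x y) (s T x' y) h
  add_right : ∀ T x y y' h, s T x (y + y') = b.add₂ T (s T x y) (s T x y') h

/-- A morphism from a biextension to itself, over the identity of `P`, `Q` and `G`. -/
structure Endo (b : Biextension S P Q G) where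
  φ : ∀ T, b.B.obj T → b.B.obj T
  natural : ∀ {T T'} (f : T ⟶ T') x, b.B.map f (φ T x) = φ T' (b.B.map f x)
  map_p : ∀ T x, b.p T (φ T x) = b.p T x
  map_q : ∀ T x, b.q T (φ T x) = b.q T x
  map_act : ∀ T g x, φ T (b.act T g x) = b.act T g (φ T x)
  map_add₁ : ∀ T x y h h', φ T (b.add₁ T x y h) = b.add₁ T (φ T x) (φ T y) h'
  map_add₂ : ∀ T x y h h', φ T (b.add₂ T x y h) = b.add₂ T (φ T x) (φ T y) h'

/-- The category of biextensions of `(P,Q)` by `G` is trivial: every biextension is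
trivial and admits no nontrivial automorphism. -/
def TrivialCategory (S : Scheme.{u}) (P Q G : (Over S)ᵒᵖ ⥤ AddCommGrpCat.{u}) : Prop :=
  (∀ b : Biextension S P Q G, b.IsTrivial) ∧
  (∀ (b : Biextension S P Q G) (ψ : b.Endo) (T : (Over S)ᵒᵖ) (x : b.B.obj T), ψ.φ T x = x)

end Biextension


/-!
The zero section of `X` is an open immersion (the diagonal of `X → S` is one) and a closed
immersion (`X` is separated), so its preimage under the morphism `P → X` induced by a
homomorphism is clopen. This preimage contains the zero section of `P`, hence meets every fibre
of `P → S`; as these fibres are connected it is all of `P`, so the morphism factors through the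
zero section of `X`.
-/

lemma _root_.AlgebraicGeometry.IsOpenImmersion.of_comp_of_isOpenImmersion_diagonal
    {X Y Z : Scheme.{u}} (f : X ⟶ Y) (g : Y ⟶ Z) [IsOpenImmersion (pullback.diagonal g)]
    [IsOpenImmersion (f ≫ g)] : IsOpenImmersion f :=
  have : MorphismProperty.HasOfPostcompProperty @IsOpenImmersion
      (MorphismProperty.diagonal @IsOpenImmersion) :=
    MorphismProperty.hasOfPostcompProperty_iff_le_diagonal.mpr le_rfl
  MorphismProperty.of_postcomp _ (W' := .diagonal @IsOpenImmersion) f g ‹_› ‹_›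

lemma HasConnectedFibres.isPreconnected_preimage_singleton {X S : Scheme.{u}} {p : X ⟶ S}
    (hp : HasConnectedFibres p) (s : S) : _root_.IsPreconnected (p ⁻¹' {s}) := by
  have : ConnectedSpace (p.fiber s) := hp s
  rw [← p.range_fiberι]
  exact isPreconnected_range (p.fiberι s).continuous

lemma HasConnectedFibres.eq_univ_of_isClopen {X S : Scheme.{u}} {p : X ⟶ S}
    (hp : HasConnectedFibres p) {U : Set X} (hU : IsClopen U) (hmeets : ∀ s, ∃ x ∈ U, p x = s) :
    U = Set.univ := by
  refine Set.eq_univ_of_forall fun x ↦ ?_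
  obtain ⟨y, hyU, hy⟩ := hmeets (p x)
  exact (hp.isPreconnected_preimage_singleton (p x)).subset_isClopen hU ⟨y, hy, hyU⟩ rfl

lemma eq_comp_of_range_subset_range_section {X Y S : Scheme.{u}} {p : X ⟶ S} {q : Y ⟶ S}
    (e : S ⟶ Y) [IsOpenImmersion e] (he : e ≫ q = 𝟙 S) (φ : X ⟶ Y) (hφ : φ ≫ q = p)
    (hrange : Set.range φ ⊆ Set.range e) : φ = p ≫ e := by
  have hlift : IsOpenImmersion.lift e φ hrange = p := by
    simpa only [Category.assoc, he, Category.comp_id, hφ] using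
      IsOpenImmersion.lift_fac e φ hrange =≫ q
  rw [← hlift, IsOpenImmersion.lift_fac]

lemma HasConnectedFibres.eq_comp_of_section_comp_eq {X Y S : Scheme.{u}} {p : X ⟶ S}
    (hp : HasConnectedFibres p) {q : Y ⟶ S} (e : S ⟶ Y) [IsOpenImmersion e]
    [IsClosedImmersion e] (he : e ≫ q = 𝟙 S) (φ : X ⟶ Y) (hφ : φ ≫ q = p) (σ : S ⟶ X)
    (hσ : σ ≫ p = 𝟙 S) (hσφ : σ ≫ φ = e) : φ = p ≫ e := by
  refine eq_comp_of_range_subset_range_section e he φ hφ ?_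
  have hclopen : IsClopen (φ ⁻¹' Set.range e) :=
    IsClopen.preimage ⟨e.isClosedEmbedding.isClosed_range, e.isOpenEmbedding.isOpen_range⟩
      φ.continuous
  have huniv := hp.eq_univ_of_isClopen hclopen fun s ↦
    ⟨σ s, ⟨s, by simp [← hσφ]⟩, by simp [← Scheme.Hom.comp_apply, hσ]⟩
  rintro _ ⟨x, rfl⟩
  exact huniv.ge (Set.mem_univ x)

namespace CommGroupScheme

variable {S : Scheme.{u}}

def point (G : CommGroupScheme S) {T : Over S} (x : G.P.obj (op T)) : T ⟶ G.X :=
  G.repr.hom.app (op T) x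

def zeroSection (G : CommGroupScheme S) : Over.mk (𝟙 S) ⟶ G.X :=
  G.point 0

def universalPoint (G : CommGroupScheme S) : G.P.obj (op G.X) :=
  G.repr.inv.app (op G.X) (𝟙 G.X)

def toSchemeHom {P X : CommGroupScheme S} (f : P.P ⟶ X.P) : P.X ⟶ X.X :=
  X.point (f.app (op P.X) P.universalPoint)

lemma point_map (G : CommGroupScheme S) {T T' : Over S} (g : T' ⟶ T) (x : G.P.obj (op T)) :
    G.point (G.P.map g.op x) = g ≫ G.point x := by
  simpa [point] using NatTrans.naturality_apply G.repr.hom g.op x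

lemma point_injective (G : CommGroupScheme S) (T : Over S) :
    Function.Injective (G.point (T := T)) :=
  (G.repr.app (op T)).toEquiv.injective

lemma map_point_universalPoint (G : CommGroupScheme S) {T : Over S} (x : G.P.obj (op T)) :
    G.P.map (G.point x).op G.universalPoint = x := by
  have h := NatTrans.naturality_apply G.repr.inv (G.point x).op (𝟙 G.X)
  simp only [Functor.comp_obj, yoneda_obj_obj, yoneda_obj_map, Quiver.Hom.unop_op,
    TypeCat.hom_ofHom, TypeCat.Fun.coe_mk, Category.comp_id, Functor.comp_map] at h
  rw [universalPoint, ← h]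
  exact (G.repr.app (op T)).toEquiv.symm_apply_apply x

lemma point_zero (G : CommGroupScheme S) (T : Over S) :
    G.point (0 : G.P.obj (op T)) = Over.mkIdTerminal.from T ≫ G.zeroSection := by
  rw [zeroSection, ← point_map, map_zero]

lemma point_app_eq_comp {P X : CommGroupScheme S} (f : P.P ⟶ X.P) {T : Over S}
    (x : P.P.obj (op T)) : X.point (f.app (op T) x) = P.point x ≫ toSchemeHom f := by
  conv_lhs => rw [← P.map_point_universalPoint x, ← ConcreteCategory.comp_apply, f.naturality]
  exact X.point_map _ _

lemma zeroSection_comp_toSchemeHom {P X : CommGroupScheme S} (f : P.P ⟶ X.P) :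
    P.zeroSection ≫ toSchemeHom f = X.zeroSection := by
  rw [zeroSection, zeroSection, ← point_app_eq_comp, map_zero]

lemma eq_zero_of_toSchemeHom_eq {P X : CommGroupScheme S} (f : P.P ⟶ X.P)
    (hf : toSchemeHom f = Over.mkIdTerminal.from P.X ≫ X.zeroSection) : f = 0 := by
  ext T x
  induction T using Opposite.rec with | op T => ?_
  apply X.point_injective T
  rw [point_app_eq_comp, hf, ← Category.assoc,
    Over.mkIdTerminal.hom_ext (_ ≫ _) (Over.mkIdTerminal.from T), ← point_zero]
  rfl

end CommGroupScheme

open CommGroupScheme in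
theorem hom_from_connected_fibres_to_unramified_eq_zero_general
    (S : Scheme.{u}) (X P : CommGroupScheme S)
    (hXsep : IsSeparated X.X.hom) (hXunr : UnramifiedHom X.X.hom)
    (hPconn : HasConnectedFibres P.X.hom) :
    ∀ f : P.P ⟶ X.P, f = 0 := by
  intro f
  have hε : X.zeroSection.left ≫ X.X.hom = 𝟙 S := Over.w X.zeroSection
  have : IsOpenImmersion (pullback.diagonal X.X.hom) := hXunr.2
  -- the identity in `hε` is stated on `(Over.mk (𝟙 S)).left`, which instance search does not
  -- see through
  have : IsIso (X.zeroSection.left ≫ X.X.hom) := by rw [hε]; exact inferInstanceAs (IsIso (𝟙 S))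
  have : IsOpenImmersion X.zeroSection.left := .of_comp_of_isOpenImmersion_diagonal _ X.X.hom
  have : IsClosedImmersion X.zeroSection.left := .of_comp _ X.X.hom
  refine eq_zero_of_toSchemeHom_eq f (Over.OverMorphism.ext ?_)
  simpa using hPconn.eq_comp_of_section_comp_eq X.zeroSection.left hε (toSchemeHom f).left
    (Over.w _) P.zeroSection.left (Over.w _)
    (by rw [← Over.comp_left, zeroSection_comp_toSchemeHom])

/-- Let `X` be a commutative `S`-group scheme which is separated and
unramified over `S`, and let `P` be a commutative `S`-group scheme which is locally of
finite presentation over `S` and has connected fibres. Then `Hom(P, X) = 0`. -/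
theorem hom_from_connected_fibres_to_unramified_eq_zero
    (S : Scheme.{u}) (X P : CommGroupScheme S)
    (hXsep : IsSeparated X.X.hom) (hXunr : UnramifiedHom X.X.hom)
    (hPlfp : LocallyOfFinitePresentation P.X.hom)
    (hPconn : HasConnectedFibres P.X.hom) :
    ∀ f : P.P ⟶ X.P, f = 0 :=
  hom_from_connected_fibres_to_unramified_eq_zero_general S X P hXsep hXunr hPconn

end FormalPaper
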